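/- Let U ⊆ ℝ² be an open set containing the origin and let f : ℝ² → ℝ be continuous on U. Suppose that on each of the four open quadrants Q_I, Q_II, Q_III, Q_IV the partial derivative ∂f/∂y exists at every point of Q ∩ U, and that for each quadrant Q there is a continuous function h_Q : ℝ² → ℝ defined (and continuous) on (closure Q) ∩ U which agrees with ∂f/∂y on Q ∩ U. Then the jump of ∂f/∂y across the x-axis is continuous through the origin, i.e. h_I(0,0) − h_IV(0,0) = h_II(0,0) − h_III(0,0). -/

import Mathlib

open Set Filter Topology

/-!
On a vertical segment `{x} × [0, y]` inside a quadrant, the mean value theorem gives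
`f (x, y) - f (x, 0) = y * h (x, c)`, and `h (x, c)` is close to `h (0, 0)` by continuity of the
extension. Letting `x → 0` (continuity of `f`) shows that `h (0, 0)` is the one-sided derivative
of `y ↦ f (0, y)` at `0`. Hence `hI (0, 0)` and `hII (0, 0)` are both the derivative from above,
`hIII (0, 0)` and `hIV (0, 0)` both the derivative from below.
-/

theorem ContinuousOn.continuousWithinAt_of_mem_closure {X Y : Type*} [TopologicalSpace X]
    [TopologicalSpace Y] {g : X → Y} {Q U : Set X} {x : X} (hg : ContinuousOn g (closure Q ∩ U))
    (hx : x ∈ closure Q) (hU : U ∈ 𝓝 x) : ContinuousWithinAt g Q x :=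
  (continuousWithinAt_inter hU).1 <|
    (hg x ⟨hx, mem_of_mem_nhds hU⟩).mono (inter_subset_inter_left U subset_closure)

theorem abs_sub_sub_mul_le_of_hasDerivAt {g g' : ℝ → ℝ} {a b c ε : ℝ} (hab : a < b)
    (hg : ContinuousOn g (Icc a b)) (hg' : ∀ t ∈ Ioo a b, HasDerivAt g (g' t) t)
    (hbound : ∀ t ∈ Ioo a b, |g' t - c| ≤ ε) :
    |g b - g a - c * (b - a)| ≤ ε * (b - a) := by
  obtain ⟨t, ht, hslope⟩ := exists_hasDerivAt_eq_slope g g' hab hg hg'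
  have hba : 0 < b - a := sub_pos.2 hab
  have hsplit : g b - g a - c * (b - a) = (g' t - c) * (b - a) := by
    rw [hslope]; field_simp
  rw [hsplit, abs_mul, abs_of_pos hba]
  exact mul_le_mul_of_nonneg_right (hbound t ht) hba.le

section Quadrant

variable {f h : ℝ × ℝ → ℝ} {s : Set ℝ} {U : Set (ℝ × ℝ)}

theorem eventually_abs_sub_sub_mul_le_of_hasDerivAt_snd (hU : IsOpen U)
    (h0 : ((0 : ℝ), (0 : ℝ)) ∈ U) (hf : ContinuousOn f U)
    (hh : ContinuousWithinAt h (s ×ˢ Ioi 0) (0, 0))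
    (hd : ∀ p ∈ s ×ˢ Ioi 0 ∩ U, HasDerivAt (fun t => f (p.1, t)) (h p) p.2)
    {ε : ℝ} (hε : 0 < ε) :
    ∀ᶠ y in 𝓝[>] 0, ∀ᶠ x in 𝓝[s] 0, |f (x, y) - f (x, 0) - h (0, 0) * y| ≤ ε * y := by
  obtain ⟨δ, hδ, hδU⟩ := Metric.isOpen_iff.1 hU _ h0
  obtain ⟨δ', hδ', hδh⟩ := Metric.continuousWithinAt_iff.1 hh ε hε
  filter_upwards [Ioo_mem_nhdsGT (lt_min hδ hδ')] with y hy
  filter_upwards [inter_mem_nhdsWithin s (Metric.ball_mem_nhds 0 (lt_min hδ hδ'))] with x hx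
  have hball : ∀ t ∈ Icc 0 y, (x, t) ∈ Metric.ball ((0 : ℝ), (0 : ℝ)) (min δ δ') := by
    intro t ht
    rw [← ball_prod_same]
    exact ⟨hx.2, by simpa [abs_of_nonneg ht.1] using ht.2.trans_lt hy.2⟩
  have hU' : ∀ t ∈ Icc 0 y, (x, t) ∈ U := fun t ht =>
    hδU (Metric.ball_subset_ball (min_le_left _ _) (hball t ht))
  simpa using abs_sub_sub_mul_le_of_hasDerivAt (g := fun t => f (x, t))
    (g' := fun t => h (x, t)) hy.1 (hf.comp (by fun_prop) hU')
    (fun t ht => hd (x, t) ⟨⟨hx.1, ht.1⟩, hU' t (Ioo_subset_Icc_self ht)⟩)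
    (fun t ht => (hδh (x := (x, t)) ⟨hx.1, ht.1⟩
      (Metric.ball_subset_ball (min_le_right _ _) (hball t (Ioo_subset_Icc_self ht)))).le)

theorem hasDerivWithinAt_Ioi_of_hasDerivAt_snd (hs : (0 : ℝ) ∈ closure s) (hU : IsOpen U)
    (h0 : ((0 : ℝ), (0 : ℝ)) ∈ U) (hf : ContinuousOn f U)
    (hh : ContinuousWithinAt h (s ×ˢ Ioi 0) (0, 0))
    (hd : ∀ p ∈ s ×ˢ Ioi 0 ∩ U, HasDerivAt (fun t => f (p.1, t)) (h p) p.2) :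
    HasDerivWithinAt (fun t => f (0, t)) (h (0, 0)) (Ioi 0) 0 := by
  have := mem_closure_iff_nhdsWithin_neBot.1 hs
  refine .of_isLittleO (Asymptotics.isLittleO_iff.2 fun ε hε => ?_)
  have hyU : ∀ᶠ y in 𝓝[>] (0 : ℝ), ((0 : ℝ), y) ∈ U :=
    nhdsWithin_le_nhds ((Continuous.prodMk_right 0).continuousAt.preimage_mem_nhds
      (hU.mem_nhds h0))
  filter_upwards [eventually_abs_sub_sub_mul_le_of_hasDerivAt_snd hU h0 hf hh hd hε, hyU,
    self_mem_nhdsWithin] with y hbound hyU (hy : 0 < y)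
  have hlim : Tendsto (fun x => f (x, y) - f (x, 0) - h (0, 0) * y) (𝓝[s] 0)
      (𝓝 (f (0, y) - f (0, 0) - h (0, 0) * y)) := by
    refine tendsto_nhdsWithin_of_tendsto_nhds (ContinuousAt.sub (ContinuousAt.sub ?_ ?_)
      continuousAt_const)
    · exact ContinuousAt.comp (x := 0) (hf.continuousAt (hU.mem_nhds hyU)) (by fun_prop)
    · exact ContinuousAt.comp (x := 0) (hf.continuousAt (hU.mem_nhds h0)) (by fun_prop)
  simpa [abs_of_pos hy, mul_comm] using le_of_tendsto hlim.abs hbound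

theorem hasDerivWithinAt_Iio_of_hasDerivAt_snd (hs : (0 : ℝ) ∈ closure s) (hU : IsOpen U)
    (h0 : ((0 : ℝ), (0 : ℝ)) ∈ U) (hf : ContinuousOn f U)
    (hh : ContinuousWithinAt h (s ×ˢ Iio 0) (0, 0))
    (hd : ∀ p ∈ s ×ˢ Iio 0 ∩ U, HasDerivAt (fun t => f (p.1, t)) (h p) p.2) :
    HasDerivWithinAt (fun t => f (0, t)) (h (0, 0)) (Iio 0) 0 := by
  let σ : ℝ × ℝ → ℝ × ℝ := fun p => (p.1, -p.2)
  have hσ : Continuous σ := by fun_prop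
  have hσQ : MapsTo σ (s ×ˢ Ioi 0) (s ×ˢ Iio 0) := fun p hp =>
    ⟨hp.1, show -p.2 < 0 from neg_neg_of_pos hp.2⟩
  have hreflected : HasDerivWithinAt (fun t => f (0, -t)) (-h (0, 0)) (Ioi 0) 0 := by
    have := hasDerivWithinAt_Ioi_of_hasDerivAt_snd (f := f ∘ σ) (h := fun p => -h (σ p))
      hs (hU.preimage hσ) (by simpa [σ] using h0)
      (hf.comp hσ.continuousOn (mapsTo_preimage σ U))
      (hh.comp_of_eq hσ.continuousWithinAt hσQ (by simp [σ])).neg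
      (fun p hp => ((hd (σ p) ⟨hσQ hp.1, hp.2⟩).comp p.2 (hasDerivAt_neg' p.2)).congr_deriv
        (mul_neg_one _))
    simpa [σ] using this
  simpa [Function.comp_def] using hreflected.comp_of_eq 0 (hasDerivWithinAt_neg 0 (Iio 0))
    (fun t ht => neg_pos.2 ht) neg_zero.symm

end Quadrant

/-- "Jump of the jump vanishes", x-axis version:
the jump of ∂f/∂y across the x-axis is continuous through the origin. -/
theorem jump_of_jump_vanishes_y
    (U : Set (ℝ × ℝ)) (hU : IsOpen U) (h0 : ((0 : ℝ), (0 : ℝ)) ∈ U)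
    (f : ℝ × ℝ → ℝ) (hf : ContinuousOn f U)
    (hI hII hIII hIV : ℝ × ℝ → ℝ)
    (hhI : ContinuousOn hI (closure {p : ℝ × ℝ | 0 < p.1 ∧ 0 < p.2} ∩ U))
    (hdI : ∀ p ∈ {p : ℝ × ℝ | 0 < p.1 ∧ 0 < p.2} ∩ U,
      HasDerivAt (fun t : ℝ => f (p.1, t)) (hI p) p.2)
    (hhII : ContinuousOn hII (closure {p : ℝ × ℝ | p.1 < 0 ∧ 0 < p.2} ∩ U))
    (hdII : ∀ p ∈ {p : ℝ × ℝ | p.1 < 0 ∧ 0 < p.2} ∩ U,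
      HasDerivAt (fun t : ℝ => f (p.1, t)) (hII p) p.2)
    (hhIII : ContinuousOn hIII (closure {p : ℝ × ℝ | p.1 < 0 ∧ p.2 < 0} ∩ U))
    (hdIII : ∀ p ∈ {p : ℝ × ℝ | p.1 < 0 ∧ p.2 < 0} ∩ U,
      HasDerivAt (fun t : ℝ => f (p.1, t)) (hIII p) p.2)
    (hhIV : ContinuousOn hIV (closure {p : ℝ × ℝ | 0 < p.1 ∧ p.2 < 0} ∩ U))
    (hdIV : ∀ p ∈ {p : ℝ × ℝ | 0 < p.1 ∧ p.2 < 0} ∩ U,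
      HasDerivAt (fun t : ℝ => f (p.1, t)) (hIV p) p.2) :
    hI (0, 0) - hIV (0, 0) = hII (0, 0) - hIII (0, 0) := by
  have hQ : ∀ {A B : Set ℝ} {g : ℝ × ℝ → ℝ}, (0 : ℝ) ∈ closure A → (0 : ℝ) ∈ closure B →
      ContinuousOn g (closure (A ×ˢ B) ∩ U) → ContinuousWithinAt g (A ×ˢ B) (0, 0) :=
    fun hA hB hg => hg.continuousWithinAt_of_mem_closure
      (by rw [closure_prod_eq]; exact ⟨hA, hB⟩) (hU.mem_nhds h0)
  have h0Ioi : (0 : ℝ) ∈ closure (Ioi 0) := by simp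
  have h0Iio : (0 : ℝ) ∈ closure (Iio 0) := by simp
  have hright_I :=
    hasDerivWithinAt_Ioi_of_hasDerivAt_snd h0Ioi hU h0 hf (hQ h0Ioi h0Ioi hhI) hdI
  have hright_II :=
    hasDerivWithinAt_Ioi_of_hasDerivAt_snd h0Iio hU h0 hf (hQ h0Iio h0Ioi hhII) hdII
  have hleft_III :=
    hasDerivWithinAt_Iio_of_hasDerivAt_snd h0Iio hU h0 hf (hQ h0Iio h0Iio hhIII) hdIII
  have hleft_IV :=
    hasDerivWithinAt_Iio_of_hasDerivAt_snd h0Ioi hU h0 hf (hQ h0Ioi h0Iio hhIV) hdIV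
  rw [(uniqueDiffWithinAt_Ioi 0).eq_deriv _ hright_I hright_II,
    (uniqueDiffWithinAt_Iio 0).eq_deriv _ hleft_IV hleft_III]
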